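/- Let φ = (1+√5)/2, let ξ ∈ ℝ be fixed, and let A(x,y,z) = (5−√5)yz⁵ + (5+√5)y⁵z − 20y³z³ + (10+10√5)x²yz³ + (10−10√5)x²y³z − 10x⁴yz. Suppose p, q, r: I → ℝ are differentiable on an interval I and satisfy, for all t ∈ I: p′ = −A(p,q,r), q′ = −A(q,r,p), r′ = −A(r,p,q), p² + q² + r² = 1, and (φ²p² − q²)(φ²q² − r²)(φ²r² − p²) = ξ. Let P = φ²p² − q² and assume P(t) ≠ 0 on I. Define Υ = (P³ − φP² − ξ)/P, and set 𝔩(X) = 14φX − 22ξ − 4φ³ and 𝔱(X) = 20X³ + 5φ²X² − 90φξX − 135ξ² − 20φ³ξ. Then Υ is differentiable and for all t ∈ I: (Υ′²·φ⁵ + 𝔩(Υ)·𝔱(Υ))² = 4·𝔱(Υ)³. In other words, the pair (Υ, Υ′) parametrizes the algebraic curve (Y²φ⁵ + 𝔩(X)𝔱(X))² = 4𝔱(X)³. -/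

import Mathlib

/-- The golden ratio. -/
noncomputable def φ : ℝ := (1 + Real.sqrt 5) / 2

/-- The numerator of the first component of the icosahedral superflow's vector field. -/
noncomputable def A (x y z : ℝ) : ℝ :=
  (5 - Real.sqrt 5) * y * z ^ 5 + (5 + Real.sqrt 5) * y ^ 5 * z - 20 * y ^ 3 * z ^ 3
    + (10 + 10 * Real.sqrt 5) * x ^ 2 * y * z ^ 3 + (10 - 10 * Real.sqrt 5) * x ^ 2 * y ^ 3 * z
    - 10 * x ^ 4 * y * z

/-- `𝔩_ξ(X) = 14φX − 22ξ − 4φ³`. -/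
noncomputable def lpoly (ξ X : ℝ) : ℝ := 14 * φ * X - 22 * ξ - 4 * φ ^ 3

/-- `𝔱_ξ(X) = 20X³ + 5φ²X² − 90φξX − 135ξ² − 20φ³ξ`. -/
noncomputable def tpoly (ξ X : ℝ) : ℝ :=
  20 * X ^ 3 + 5 * φ ^ 2 * X ^ 2 - 90 * φ * ξ * X - 135 * ξ ^ 2 - 20 * φ ^ 3 * ξ

/-!
Write `P, Q, R` for `φ²p² − q², φ²q² − r², φ²r² − p²`. Since `φ² − 1 = φ`, the sphere constraint
reads `P + Q + R = φ`, so `P, Q, R` are the roots of `X³ − φX² − ΥX − ξ` with `Υ = −(PQ + QR + RP)`,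
and `𝔱(Υ)` is five times the discriminant `D²`, `D = (P − Q)(Q − R)(P − R)`, of that cubic.
The flow differentiates `P` into `8(5 − √5)·pqr·P(Q − R)`, hence `Υ′ = 8(5 − √5)·pqr·D`.
Finally `𝔩(Υ) = 2√5 D − 256φ³(pqr)²`; since `(5 − √5)φ = 2√5`, the `pqr` terms cancel in
`Υ′²φ⁵ + 𝔩(Υ)𝔱(Υ) = 10√5 D³`, whose square is `500 D⁶ = 4𝔱(Υ)³`.
-/

noncomputable def goldenQuad (x y : ℝ) : ℝ := φ ^ 2 * x ^ 2 - y ^ 2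

lemma golden_sq : φ ^ 2 = φ + 1 := by
  have h5 : √5 ^ 2 = 5 := Real.sq_sqrt (by norm_num)
  unfold φ
  linear_combination h5 / 4

lemma five_sub_sqrt_five_mul_golden : (5 - √5) * φ = 2 * √5 := by
  have h5 : √5 ^ 2 = 5 := Real.sq_sqrt (by norm_num)
  unfold φ
  linear_combination -h5 / 2

lemma goldenQuad_add_add (a b c : ℝ) :
    goldenQuad a b + goldenQuad b c + goldenQuad c a = φ * (a ^ 2 + b ^ 2 + c ^ 2) := by
  unfold goldenQuad
  linear_combination (a ^ 2 + b ^ 2 + c ^ 2) * golden_sq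

lemma four_mul_golden_mul_sq (a b c : ℝ) :
    4 * φ * a ^ 2 = (φ + 1) * goldenQuad a b + goldenQuad b c + (2 - φ) * goldenQuad c a := by
  unfold goldenQuad
  linear_combination (-(φ + 2) * a ^ 2 - b ^ 2 + (φ - 1) * c ^ 2) * golden_sq

lemma goldenQuad_flow (a b c : ℝ) :
    2 * φ ^ 2 * a * (-A a b c) - 2 * b * (-A b c a)
      = 8 * (5 - √5) * (a * b * c) * (goldenQuad a b * (goldenQuad b c - goldenQuad c a)) := by
  have h5 : √5 ^ 2 = 5 := Real.sq_sqrt (by norm_num)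
  unfold A goldenQuad φ
  linear_combination a * b * c * (2 * a ^ 4 * √5 - a ^ 4 + 1/2 * a ^ 2 * b ^ 2 * √5 ^ 3
    - 1/2 * a ^ 2 * b ^ 2 * √5 ^ 2 + 1/2 * a ^ 2 * b ^ 2 * √5 - 21/2 * a ^ 2 * b ^ 2
    - 1/2 * a ^ 2 * c ^ 2 * √5 ^ 3 + 1/2 * a ^ 2 * c ^ 2 * √5 ^ 2 - 5/2 * a ^ 2 * c ^ 2 * √5
    + 13/2 * a ^ 2 * c ^ 2 - 5/2 * b ^ 4 * √5 + 5/2 * b ^ 4 + 2 * b ^ 2 * c ^ 2 * √5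
    + 4 * b ^ 2 * c ^ 2 + 1/2 * c ^ 4 * √5 - 3/2 * c ^ 4) * h5

lemma hasDerivAt_goldenQuad_flow {p q r : ℝ → ℝ} {t : ℝ}
    (hp : HasDerivAt p (-A (p t) (q t) (r t)) t) (hq : HasDerivAt q (-A (q t) (r t) (p t)) t) :
    HasDerivAt (fun s => goldenQuad (p s) (q s))
      (8 * (5 - √5) * (p t * q t * r t) *
        (goldenQuad (p t) (q t) * (goldenQuad (q t) (r t) - goldenQuad (r t) (p t)))) t := by
  rw [← goldenQuad_flow]
  refine (((hp.fun_pow 2).const_mul (φ ^ 2)).fun_sub (hq.fun_pow 2)).congr_deriv ?_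
  push_cast
  ring

lemma HasDerivAt.cubic_div {f : ℝ → ℝ} {f' x k ξ : ℝ} (hf : HasDerivAt f f' x) (hx : f x ≠ 0) :
    HasDerivAt (fun y => (f y ^ 3 - k * f y ^ 2 - ξ) / f y)
      (f' * (2 * f x ^ 3 - k * f x ^ 2 + ξ) / f x ^ 2) x := by
  refine ((((hf.fun_pow 3).fun_sub ((hf.fun_pow 2).const_mul k)).sub_const ξ).div hf hx
    ).congr_deriv ?_
  push_cast
  ring

section Vieta

variable {P Q R k ξ : ℝ}

lemma cubic_sub_eq_neg_sigma2_mul (hs : P + Q + R = k) (hp : P * Q * R = ξ) :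
    P ^ 3 - k * P ^ 2 - ξ = -(P * Q + Q * R + R * P) * P := by
  rw [← hs, ← hp]
  ring

lemma two_cubic_add_eq (hs : P + Q + R = k) (hp : P * Q * R = ξ) :
    2 * P ^ 3 - k * P ^ 2 + ξ = P * ((P - Q) * (P - R)) := by
  rw [← hs, ← hp]
  ring

lemma tpoly_neg_sigma2 (hs : P + Q + R = φ) (hp : P * Q * R = ξ) :
    tpoly ξ (-(P * Q + Q * R + R * P)) = 5 * ((P - Q) * (Q - R) * (P - R)) ^ 2 := by
  rw [tpoly, ← hs, ← hp]
  ring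

-- For `P, Q, R = goldenQuad a b, goldenQuad b c, goldenQuad c a` the three factors of the product
-- are `4φa², 4φb², 4φc²` (`four_mul_golden_mul_sq`).
lemma lpoly_neg_sigma2 (hs : P + Q + R = φ) (hp : P * Q * R = ξ) :
    lpoly ξ (-(P * Q + Q * R + R * P))
      = 2 * √5 * ((P - Q) * (Q - R) * (P - R))
        - 4 * (((φ + 1) * P + Q + (2 - φ) * R) * ((φ + 1) * Q + R + (2 - φ) * P)
          * ((φ + 1) * R + P + (2 - φ) * Q)) := by
  have hsqrt5 : √5 = 2 * φ - 1 := by unfold φ; ring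
  rw [lpoly, ← hp, hsqrt5]
  linear_combination
    (14 * (P * Q + Q * R + R * P) + 4 * ((P + Q + R) ^ 2 + (P + Q + R) * φ + φ ^ 2)) * hs
    + (-4 * φ * ((P - Q) * (Q - R) * (R - P)) - 4 * (P ^ 3 + Q ^ 3 + R ^ 3)
      - 4 * (P ^ 2 * Q + Q ^ 2 * R + R ^ 2 * P) + 24 * P * Q * R) * golden_sq

end Vieta

lemma curve_identity (x y z D : ℝ) :
    ((8 * (5 - √5) * (x * y * z) * D) ^ 2 * φ ^ 5
        + (2 * √5 * D - 4 * ((4 * φ * x ^ 2) * (4 * φ * y ^ 2) * (4 * φ * z ^ 2)))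
          * (5 * D ^ 2)) ^ 2
      = 4 * (5 * D ^ 2) ^ 3 := by
  have h5 : √5 ^ 2 = 5 := Real.sq_sqrt (by norm_num)
  have hinner : (8 * (5 - √5) * (x * y * z) * D) ^ 2 * φ ^ 5
      + (2 * √5 * D - 4 * ((4 * φ * x ^ 2) * (4 * φ * y ^ 2) * (4 * φ * z ^ 2))) * (5 * D ^ 2)
      = 10 * √5 * D ^ 3 := by
    linear_combination 64 * (x * y * z * D) ^ 2 * φ ^ 3 * ((5 - √5) * φ + 2 * √5)
      * five_sub_sqrt_five_mul_golden + 256 * (x * y * z * D) ^ 2 * φ ^ 3 * h5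
  rw [hinner]
  linear_combination 100 * D ^ 6 * h5

lemma hasDerivAt_resolvent_flow {p q r : ℝ → ℝ} {t ξ : ℝ}
    (hp : HasDerivAt p (-A (p t) (q t) (r t)) t) (hq : HasDerivAt q (-A (q t) (r t) (p t)) t)
    (hs : goldenQuad (p t) (q t) + goldenQuad (q t) (r t) + goldenQuad (r t) (p t) = φ)
    (hξ : goldenQuad (p t) (q t) * goldenQuad (q t) (r t) * goldenQuad (r t) (p t) = ξ)
    (hne : goldenQuad (p t) (q t) ≠ 0) :
    HasDerivAt
      (fun s => (goldenQuad (p s) (q s) ^ 3 - φ * goldenQuad (p s) (q s) ^ 2 - ξ)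
        / goldenQuad (p s) (q s))
      (8 * (5 - √5) * (p t * q t * r t) * ((goldenQuad (p t) (q t) - goldenQuad (q t) (r t))
        * (goldenQuad (q t) (r t) - goldenQuad (r t) (p t))
        * (goldenQuad (p t) (q t) - goldenQuad (r t) (p t)))) t := by
  refine ((hasDerivAt_goldenQuad_flow hp hq).cubic_div hne).congr_deriv ?_
  rw [two_cubic_add_eq hs hξ]
  field_simp

theorem stmt13_general (ξ : ℝ) (I : Set ℝ) (p q r : ℝ → ℝ)
    (hp : ∀ t ∈ I, HasDerivAt p (-(A (p t) (q t) (r t))) t)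
    (hq : ∀ t ∈ I, HasDerivAt q (-(A (q t) (r t) (p t))) t)
    (hsph : ∀ t ∈ I, (p t) ^ 2 + (q t) ^ 2 + (r t) ^ 2 = 1)
    (hxi : ∀ t ∈ I, (φ ^ 2 * (p t) ^ 2 - (q t) ^ 2) * (φ ^ 2 * (q t) ^ 2 - (r t) ^ 2)
        * (φ ^ 2 * (r t) ^ 2 - (p t) ^ 2) = ξ)
    (P : ℝ → ℝ) (hP : ∀ t, P t = φ ^ 2 * (p t) ^ 2 - (q t) ^ 2)
    (hP0 : ∀ t ∈ I, P t ≠ 0)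
    (Υ : ℝ → ℝ) (hΥ : ∀ t, Υ t = ((P t) ^ 3 - φ * (P t) ^ 2 - ξ) / (P t)) :
    ∀ t ∈ I, DifferentiableAt ℝ Υ t ∧
      ((deriv Υ t) ^ 2 * φ ^ 5 + lpoly ξ (Υ t) * tpoly ξ (Υ t)) ^ 2
        = 4 * (tpoly ξ (Υ t)) ^ 3 := by
  intro t ht
  have hs : goldenQuad (p t) (q t) + goldenQuad (q t) (r t) + goldenQuad (r t) (p t) = φ := by
    rw [goldenQuad_add_add, hsph t ht, mul_one]
  have hξ : goldenQuad (p t) (q t) * goldenQuad (q t) (r t) * goldenQuad (r t) (p t) = ξ :=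
    hxi t ht
  have hne : goldenQuad (p t) (q t) ≠ 0 := by
    rw [goldenQuad, ← hP]
    exact hP0 t ht
  obtain rfl : Υ = fun s =>
      (goldenQuad (p s) (q s) ^ 3 - φ * goldenQuad (p s) (q s) ^ 2 - ξ) / goldenQuad (p s) (q s) :=
    funext fun s => by rw [hΥ, hP, goldenQuad]
  have hd := hasDerivAt_resolvent_flow (hp t ht) (hq t ht) hs hξ hne
  refine ⟨hd.differentiableAt, ?_⟩
  rw [hd.deriv]
  beta_reduce
  rw [cubic_sub_eq_neg_sigma2_mul hs hξ, mul_div_cancel_right₀ _ hne,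
    tpoly_neg_sigma2 hs hξ, lpoly_neg_sigma2 hs hξ, ← four_mul_golden_mul_sq,
    ← four_mul_golden_mul_sq, ← four_mul_golden_mul_sq]
  exact curve_identity _ _ _ _

/-- Triple reduction of the differential system: along a solution of the characteristic
system of the icosahedral superflow, with `P = φ²p² − q²` nonvanishing and
`Υ = (P³ − φP² − ξ)/P`, the pair `(Υ, Υ′)` parametrizes the algebraic curve
`(Y²φ⁵ + 𝔩(X)𝔱(X))² = 4𝔱(X)³`. -/
theorem stmt13 (ξ : ℝ) (I : Set ℝ) (hI : I.OrdConnected) (p q r : ℝ → ℝ)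
    (hp : ∀ t ∈ I, HasDerivAt p (-(A (p t) (q t) (r t))) t)
    (hq : ∀ t ∈ I, HasDerivAt q (-(A (q t) (r t) (p t))) t)
    (hr : ∀ t ∈ I, HasDerivAt r (-(A (r t) (p t) (q t))) t)
    (hsph : ∀ t ∈ I, (p t) ^ 2 + (q t) ^ 2 + (r t) ^ 2 = 1)
    (hxi : ∀ t ∈ I, (φ ^ 2 * (p t) ^ 2 - (q t) ^ 2) * (φ ^ 2 * (q t) ^ 2 - (r t) ^ 2)
        * (φ ^ 2 * (r t) ^ 2 - (p t) ^ 2) = ξ)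
    (P : ℝ → ℝ) (hP : ∀ t, P t = φ ^ 2 * (p t) ^ 2 - (q t) ^ 2)
    (hP0 : ∀ t ∈ I, P t ≠ 0)
    (Υ : ℝ → ℝ) (hΥ : ∀ t, Υ t = ((P t) ^ 3 - φ * (P t) ^ 2 - ξ) / (P t)) :
    ∀ t ∈ I, DifferentiableAt ℝ Υ t ∧
      ((deriv Υ t) ^ 2 * φ ^ 5 + lpoly ξ (Υ t) * tpoly ξ (Υ t)) ^ 2
        = 4 * (tpoly ξ (Υ t)) ^ 3 :=
  stmt13_general ξ I p q r hp hq hsph hxi P hP hP0 Υ hΥ
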